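/- Let (a,c) ∈ ℕ^k × ℕ^k satisfy the Wishart matching condition, and let n_+(a,c) be the number of positions i ∈ {1,...,2k} such that the i-th element of the matching list appears at least 4 times in the list. Then n_+(a,c) ≤ 4(k + 1 − (#a + #c)). -/

import Mathlib

/-- The cyclic Wishart list of `2k` couples
`(a₁,c₁), (a₂,c₁), (a₂,c₂), (a₃,c₂), …, (a_k,c_k), (a₁,c_k)`,
indexed by `Fin k × Bool`: position `(i, false)` carries `(aᵢ, cᵢ)` and
position `(i, true)` carries `(aᵢ₊₁, cᵢ)` (indices mod `k`). -/
def wlist {k : ℕ} [NeZero k] (a c : Fin k → ℕ) (q : Fin k × Bool) : ℕ × ℕ :=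
  if q.2 then (a (q.1 + 1), c q.1) else (a q.1, c q.1)

/-- The Wishart matching condition: every couple appears an even number of times
in the Wishart list. -/
def WishartMatching {k : ℕ} [NeZero k] (a c : Fin k → ℕ) : Prop :=
  ∀ p : ℕ × ℕ, Even (Nat.card {q : Fin k × Bool // wlist a c q = p})

/-- `#a`, the number of distinct values among the coordinates of `a`. -/
def numDistinct {k : ℕ} (a : Fin k → ℕ) : ℕ := (Finset.univ.image a).card

/-- `d_W(a,c)`, the number of distinct couples in the Wishart list. -/
def dW {k : ℕ} [NeZero k] (a c : Fin k → ℕ) : ℕ :=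
  (Finset.univ.image (wlist a c)).card

/-- `n₊(a,c)`: the number of positions whose couple appears at least 4 times in
the Wishart list. -/
noncomputable def nPlus {k : ℕ} [NeZero k] (a c : Fin k → ℕ) : ℕ :=
  Nat.card {q : Fin k × Bool //
    4 ≤ Nat.card {q' : Fin k × Bool // wlist a c q' = wlist a c q}}

/-! The distinct couples of the Wishart list are the edges of a bipartite graph on the
`#a + #c` distinct values of `a` and `c`. The list is a closed walk through all of them, so this
graph is connected and has at least `#a + #c - 1` edges, i.e. `#a + #c ≤ d_W + 1`.
By the matching condition every couple occurs exactly twice or at least four times, and counting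
the `2k` positions couple by couple gives `n₊ + 4 d_W ≤ 4k`. -/

open Finset in
theorem natCard_four_le_fiber_add_four_mul_natCard_range_le {ι β : Type*} [Finite ι]
    (f : ι → β) (heven : ∀ b, Even (Nat.card {i // f i = b})) :
    Nat.card {i // 4 ≤ Nat.card {j // f j = f i}} + 4 * Nat.card (Set.range f) ≤
      2 * Nat.card ι := by
  classical
  have := Fintype.ofFinite ι
  set m : β → ℕ := fun b => #{i | f i = b}
  have hmult : ∀ b, Nat.card {i // f i = b} = m b := fun b => by
    rw [Nat.card_eq_fintype_card, Fintype.card_subtype]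
  simp only [hmult] at heven ⊢
  rw [Nat.card_eq_fintype_card, Fintype.card_subtype, Nat.card_eq_card_toFinset,
    Set.toFinset_range, Nat.card_eq_fintype_card, ← card_univ]
  have hfiber : ∀ b ∈ univ.image f, #{i | 4 ≤ m (f i) ∧ f i = b} + 4 ≤ 2 * m b := by
    intro b hb
    by_cases h4 : 4 ≤ m b
    · have : #{i | 4 ≤ m (f i) ∧ f i = b} ≤ m b := card_le_card fun i => by simp_all
      omega
    · have hempty : #{i | 4 ≤ m (f i) ∧ f i = b} = 0 :=
        card_eq_zero.2 <| filter_eq_empty_iff.2 fun i _ ⟨hi, hib⟩ => h4 (hib ▸ hi)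
      obtain ⟨i, -, rfl⟩ := mem_image.1 hb
      have hpos : 0 < m (f i) := card_pos.2 ⟨i, by simp⟩
      obtain ⟨r, hr⟩ := heven (f i)
      omega
  calc #{i | 4 ≤ m (f i)} + 4 * #(univ.image f)
      = ∑ b ∈ univ.image f, (#{i | 4 ≤ m (f i) ∧ f i = b} + 4) := by
        rw [card_eq_sum_card_fiberwise (f := f) (t := univ.image f)
          fun i _ => mem_image_of_mem f (mem_univ i)]
        simp [sum_add_distrib, filter_filter, mul_comm]
    _ ≤ ∑ b ∈ univ.image f, 2 * m b := sum_le_sum hfiber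
    _ = 2 * #(univ : Finset ι) := by
        rw [← mul_sum, card_eq_sum_card_image f univ]

section CoupleGraph

variable {α β : Type*} (E : Set (α × β))

def coupleEdge (p : E) : Sym2 ((Prod.fst '' E) ⊕ (Prod.snd '' E)) :=
  s(.inl ⟨p.1.1, Set.mem_image_of_mem _ p.2⟩, .inr ⟨p.1.2, Set.mem_image_of_mem _ p.2⟩)

/-- First and second coordinates are distinct vertices even when they are equal as values. -/
def coupleGraph : SimpleGraph ((Prod.fst '' E) ⊕ (Prod.snd '' E)) :=
  SimpleGraph.fromEdgeSet (Set.range (coupleEdge E))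

variable {E}

theorem coupleGraph_adj_of_mem {x : α} {y : β} (hxy : (x, y) ∈ E) (hx : x ∈ Prod.fst '' E)
    (hy : y ∈ Prod.snd '' E) : (coupleGraph E).Adj (.inl ⟨x, hx⟩) (.inr ⟨y, hy⟩) :=
  (SimpleGraph.fromEdgeSet_adj _).2 ⟨⟨⟨(x, y), hxy⟩, rfl⟩, Sum.inl_ne_inr⟩

theorem natCard_fst_image_add_natCard_snd_image_le [Finite E] (hE : (coupleGraph E).Connected) :
    Nat.card (Prod.fst '' E) + Nat.card (Prod.snd '' E) ≤ Nat.card E + 1 := by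
  rw [← Nat.card_sum]
  refine hE.card_vert_le_card_edgeSet_add_one.trans (Nat.add_le_add_right ?_ 1)
  calc Nat.card (coupleGraph E).edgeSet
      ≤ Nat.card (Set.range (coupleEdge E)) := by
        refine Nat.card_mono (Set.finite_range _) ?_
        rw [coupleGraph, SimpleGraph.edgeSet_fromEdgeSet]
        exact Set.sdiff_subset
    _ ≤ Nat.card E := Finite.card_range_le _

end CoupleGraph

theorem numDistinct_eq_natCard_range {n : ℕ} (a : Fin n → ℕ) :
    numDistinct a = Nat.card (Set.range a) := by
  classical
  rw [Nat.card_eq_card_toFinset, Set.toFinset_range, numDistinct]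

section Wishart

open Fin.NatCast

variable {k : ℕ} [NeZero k] (a c : Fin k → ℕ)

theorem fst_image_range_wlist : Prod.fst '' Set.range (wlist a c) = Set.range a := by
  ext x
  constructor
  · rintro ⟨_, ⟨⟨i, b⟩, rfl⟩, rfl⟩
    cases b
    exacts [⟨i, rfl⟩, ⟨i + 1, rfl⟩]
  · rintro ⟨i, rfl⟩
    exact ⟨_, ⟨(i, false), rfl⟩, rfl⟩

theorem snd_image_range_wlist : Prod.snd '' Set.range (wlist a c) = Set.range c := by
  ext y
  constructor
  · rintro ⟨_, ⟨⟨i, b⟩, rfl⟩, rfl⟩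
    cases b <;> exact ⟨i, rfl⟩
  · rintro ⟨i, rfl⟩
    exact ⟨_, ⟨(i, false), rfl⟩, rfl⟩

theorem coupleGraph_range_wlist_connected : (coupleGraph (Set.range (wlist a c))).Connected := by
  set G := coupleGraph (Set.range (wlist a c))
  have memA : ∀ i, a i ∈ Prod.fst '' Set.range (wlist a c) := fun i => by
    rw [fst_image_range_wlist]; exact ⟨i, rfl⟩
  have memC : ∀ i, c i ∈ Prod.snd '' Set.range (wlist a c) := fun i => by
    rw [snd_image_range_wlist]; exact ⟨i, rfl⟩
  have adj_same : ∀ i, G.Adj (.inl ⟨a i, memA i⟩) (.inr ⟨c i, memC i⟩) := fun i =>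
    coupleGraph_adj_of_mem (E := Set.range (wlist a c)) ⟨(i, false), rfl⟩ _ _
  have adj_next : ∀ i, G.Adj (.inr ⟨c i, memC i⟩) (.inl ⟨a (i + 1), memA (i + 1)⟩) := fun i =>
    (coupleGraph_adj_of_mem (E := Set.range (wlist a c)) ⟨(i, true), rfl⟩ _ _).symm
  have reach_nat : ∀ n : ℕ, G.Reachable (.inl ⟨a 0, memA 0⟩) (.inl ⟨a n, memA (n : Fin k)⟩) := by
    intro n
    induction n with
    | zero => simp
    | succ n ih =>
      simpa using ih.trans ((adj_same n).reachable.trans (adj_next n).reachable)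
  have reach_fin : ∀ i : Fin k, G.Reachable (.inl ⟨a 0, memA 0⟩) (.inl ⟨a i, memA i⟩) :=
    fun i => by simpa using reach_nat i
  have reach : ∀ v, G.Reachable (.inl ⟨a 0, memA 0⟩) v := by
    rintro (⟨x, hx⟩ | ⟨y, hy⟩)
    · obtain ⟨i, rfl⟩ := fst_image_range_wlist a c ▸ hx
      exact reach_fin i
    · obtain ⟨i, rfl⟩ := snd_image_range_wlist a c ▸ hy
      exact (reach_fin i).trans (adj_same i).reachable
  exact ⟨fun u v => (reach u).symm.trans (reach v)⟩

end Wishart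

/-- If `(a,c)` satisfies the Wishart matching condition then
`n₊(a,c) ≤ 4 (k + 1 − (#a + #c))`. -/
theorem wishart_nPlus_bound {k : ℕ} [NeZero k] (a c : Fin k → ℕ)
    (h : WishartMatching a c) :
    nPlus a c ≤ 4 * (k + 1 - (numDistinct a + numDistinct c)) := by
  have hcount := natCard_four_le_fiber_add_four_mul_natCard_range_le (wlist a c) h
  have hgraph :=
    natCard_fst_image_add_natCard_snd_image_le (coupleGraph_range_wlist_connected a c)
  rw [fst_image_range_wlist, snd_image_range_wlist] at hgraph
  rw [Nat.card_prod, Nat.card_fin, Nat.card_eq_fintype_card (α := Bool),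
    Fintype.card_bool] at hcount
  rw [numDistinct_eq_natCard_range, numDistinct_eq_natCard_range]
  unfold nPlus
  omega
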